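/- For each canonical interval [b,e] with respect to column j-1 (rows whose haplotypes are all equal), the image {fore[t][j-1] : b ≤ t ≤ e} is an interval of consecutive integers, and it is contained in a single canonical interval with respect to column j; consequently ℓ_j ≤ ℓ_{j-1}. -/

import Mathlib

/-!
Identical rows have the same `revPrefix` of every length, and
`revPrefix S (j + 1) i = S i j :: revPrefix S j i`. So a row that `PA₂` places strictly between two
identical rows shares their length-`j` prefix and lies between them in index, hence `PA₁` places
it between them too: `fore = PA₂⁻¹ ∘ PA₁` sends identical rows that are adjacent in `PA₁` to
adjacent positions of `PA₂`. Iterating this along a canonical interval gives the first two claims.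
For the third, a sequence of length `h` has `h` minus (number of positions whose successor carries
the same value) runs, and the injective map `fore` sends such positions of `PA₁` to such positions
of `PA₂`.
-/

namespace PBWT

/-- The reversed prefix of length `j` (truncated at `w`) of haplotype `i`:
used to express the co-lexicographic order of prefixes. -/
def revPrefix {h w : ℕ} (S : Fin h → Fin w → ℕ) (j : ℕ) (i : Fin h) : List ℕ :=
  ((List.range j).filterMap (fun t => if ht : t < w then some (S i ⟨t, ht⟩) else none)).reverse

/-- `PA` is the stable sort of the haplotype indices by the co-lexicographic
order of their prefixes of length `j` (ties broken by original index). -/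
def IsStableSort {h w : ℕ} (S : Fin h → Fin w → ℕ) (j : ℕ) (PA : Fin h ≃ Fin h) : Prop :=
  ∀ a b : Fin h, a < b →
    List.Lex (· < ·) (revPrefix S j (PA a)) (revPrefix S j (PA b)) ∨
      (revPrefix S j (PA a) = revPrefix S j (PA b) ∧ (PA a).val < (PA b).val)

/-- Number of maximal runs of equal adjacent values in the sequence `f`. -/
def runCount {α : Type*} [DecidableEq α] {n : ℕ} (f : Fin n → α) : ℕ :=
  ((List.ofFn f).destutter (· ≠ ·)).length

/-- `h''`: the number of indices `i` with `S i ≠ S (i+1)`. -/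
noncomputable def adjDiff {h w : ℕ} (S : Fin h → Fin w → ℕ) : ℕ :=
  Nat.card {i : Fin h // ∃ h1 : (i : ℕ) + 1 < h, S i ≠ S ⟨(i : ℕ) + 1, h1⟩}

open Finset

section Sorting

variable {h w : ℕ} (S : Fin h → Fin w → ℕ)

def sortKey (j : ℕ) (i : Fin h) : List ℕ ×ₗ Fin h := toLex (revPrefix S j i, i)

lemma revPrefix_succ {j : ℕ} (hj : j < w) (i : Fin h) :
    revPrefix S (j + 1) i = S i ⟨j, hj⟩ :: revPrefix S j i := by
  simp [revPrefix, List.range_succ, hj]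

lemma sortKey_lt_sortKey_iff_of_revPrefix_eq {j : ℕ} {x z : Fin h}
    (hxz : revPrefix S j x = revPrefix S j z) : sortKey S j x < sortKey S j z ↔ x < z := by
  simp [sortKey, Prod.Lex.toLex_lt_toLex, hxz]

variable {S} {j : ℕ}

lemma IsStableSort.strictMono {PA : Fin h ≃ Fin h} (hPA : IsStableSort S j PA) :
    StrictMono (sortKey S j ∘ PA) :=
  fun a b hab => Prod.Lex.toLex_lt_toLex.2 (hPA a b hab)

lemma IsStableSort.symm_lt_symm_iff {PA : Fin h ≃ Fin h} (hPA : IsStableSort S j PA)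
    {x y : Fin h} : PA.symm x < PA.symm y ↔ sortKey S j x < sortKey S j y := by
  simpa using (hPA.strictMono.lt_iff_lt (a := PA.symm x) (b := PA.symm y)).symm

lemma IsStableSort.symm_covBy_symm (hj : j < w) {PA₁ PA₂ : Fin h ≃ Fin h}
    (hPA₁ : IsStableSort S j PA₁) (hPA₂ : IsStableSort S (j + 1) PA₂) {x y : Fin h}
    (hS : S x = S y) (hxy : PA₁.symm x ⋖ PA₁.symm y) : PA₂.symm x ⋖ PA₂.symm y := by
  have hrp : ∀ k, revPrefix S k x = revPrefix S k y := fun k => by simp only [revPrefix, hS]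
  have hx_lt_y : x < y :=
    (sortKey_lt_sortKey_iff_of_revPrefix_eq S (hrp j)).1 (hPA₁.symm_lt_symm_iff.1 hxy.lt)
  refine ⟨hPA₂.symm_lt_symm_iff.2
    ((sortKey_lt_sortKey_iff_of_revPrefix_eq S (hrp _)).2 hx_lt_y), fun u hxu huy => ?_⟩
  obtain ⟨z, rfl⟩ := PA₂.symm.surjective u
  rw [hPA₂.symm_lt_symm_iff] at hxu huy
  have hz : revPrefix S (j + 1) z = revPrefix S (j + 1) x :=
    le_antisymm ((hrp _).symm ▸ Prod.Lex.monotone_fst _ _ huy.le)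
      (Prod.Lex.monotone_fst _ _ hxu.le)
  have hz' : revPrefix S j x = revPrefix S j z := by
    rw [revPrefix_succ S hj, revPrefix_succ S hj] at hz
    exact (List.cons.inj hz).2.symm
  rw [sortKey_lt_sortKey_iff_of_revPrefix_eq S hz.symm] at hxu
  rw [sortKey_lt_sortKey_iff_of_revPrefix_eq S (hz.trans (hrp _))] at huy
  exact hxy.2
    (hPA₁.symm_lt_symm_iff.2 ((sortKey_lt_sortKey_iff_of_revPrefix_eq S hz').2 hxu))
    (hPA₁.symm_lt_symm_iff.2 ((sortKey_lt_sortKey_iff_of_revPrefix_eq S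
      (hz'.symm.trans (hrp j))).2 huy))

end Sorting

section Fin

variable {n m : ℕ}

lemma _root_.Fin.val_eq_add_sub_of_covBy {f : Fin n → Fin m} {b e : Fin n}
    (hf : ∀ s t, b ≤ s → t ≤ e → s ⋖ t → f s ⋖ f t) (t : Fin n) (hbt : b ≤ t) (hte : t ≤ e) :
    (f t : ℕ) = f b + (t - b) := by
  obtain ⟨t, ht⟩ := t
  simp only [Fin.le_def] at hbt hte ⊢
  induction t with
  | zero =>
    obtain rfl : b = ⟨0, ht⟩ := Fin.ext (show (b : ℕ) = 0 by omega)
    simp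
  | succ k ih =>
    rcases hbt.eq_or_lt with hb | hb
    · obtain rfl : b = ⟨k + 1, ht⟩ := Fin.ext hb
      simp
    have hcov := hf ⟨k, by omega⟩ ⟨k + 1, ht⟩ (Fin.le_def.2 (show (b : ℕ) ≤ k by omega)) (Fin.le_def.2 hte)
      (Fin.covBy_iff.2 (Nat.covBy_iff_add_one_eq.2 rfl))
    rw [Fin.covBy_iff, Nat.covBy_iff_add_one_eq] at hcov
    have := ih (by omega) (by omega) (by omega)
    omega

lemma _root_.Fin.exists_eq_of_val_eq_add_sub {f : Fin n → Fin m} {b e : Fin n} (hbe : b ≤ e)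
    (hf : ∀ t, b ≤ t → t ≤ e → (f t : ℕ) = f b + (t - b)) (u : Fin m) (hbu : f b ≤ u)
    (hue : u ≤ f e) : ∃ t, b ≤ t ∧ t ≤ e ∧ f t = u := by
  have he := hf e hbe le_rfl
  rw [Fin.le_def] at hbe hbu hue
  let t : Fin n := ⟨b + (u - f b), by omega⟩
  have hbt : b ≤ t := Fin.le_def.2 (Nat.le_add_right _ _)
  have hte : t ≤ e := Fin.le_def.2 (show (b : ℕ) + (u - f b) ≤ e by omega)
  refine ⟨t, hbt, hte, Fin.ext ?_⟩
  rw [hf t hbt hte, show (t : ℕ) = b + (u - f b) from rfl]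
  omega

end Fin

section RunCount

variable {α : Type*}

open Classical in
noncomputable def repeatPositions {n : ℕ} (f : Fin n → α) : Finset (Fin n) :=
  {i | ∃ i', i ⋖ i' ∧ f i = f i'}

variable [DecidableEq α]

lemma runCount_eq_runCount_tail_add {n : ℕ} (f : Fin (n + 2) → α) :
    runCount f = runCount (Fin.tail f) + if f 0 = f 1 then 0 else 1 := by
  simp only [runCount, List.ofFn_succ, List.destutter_cons']
  split_ifs <;> simp_all [Fin.tail]

lemma card_repeatPositions_eq_card_tail_add {n : ℕ} (f : Fin (n + 2) → α) :
    #(repeatPositions f) = #(repeatPositions (Fin.tail f)) + if f 0 = f 1 then 1 else 0 := by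
  classical
  simp only [repeatPositions, Finset.card_filter, Fin.sum_univ_succ (n := n + 1)]
  have h0 : (∃ i', (0 : Fin (n + 2)) ⋖ i' ∧ f 0 = f i') ↔ f 0 = f 1 := by
    simp [Fin.exists_fin_succ]
  have hs : ∀ i : Fin (n + 1), (∃ i', i.succ ⋖ i' ∧ f i.succ = f i') ↔
      ∃ i', i ⋖ i' ∧ Fin.tail f i = Fin.tail f i' := by
    simp [Fin.exists_fin_succ, Fin.tail]
  rw [add_comm]
  congr 1
  -- `convert` reconciles the classical `Decidable` instance of the filter with the synthesized one
  · exact Finset.sum_congr rfl fun i _ => by convert if_congr (hs i) rfl rfl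
  · convert if_congr h0 rfl rfl

lemma runCount_add_card_repeatPositions : ∀ {n : ℕ} (f : Fin n → α),
    runCount f + #(repeatPositions f) = n
  | 0, f => by simp [runCount, repeatPositions]
  | 1, f => by simp [runCount, repeatPositions]
  | n + 2, f => by
    have := runCount_add_card_repeatPositions (Fin.tail f)
    rw [runCount_eq_runCount_tail_add, card_repeatPositions_eq_card_tail_add]
    split_ifs <;> omega

end RunCount

section Fore

variable {h w j : ℕ} {S : Fin h → Fin w → ℕ} {PA₁ PA₂ : Fin h ≃ Fin h}

lemma IsStableSort.card_repeatPositions_le (hj : j < w) (hPA₁ : IsStableSort S j PA₁)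
    (hPA₂ : IsStableSort S (j + 1) PA₂) :
    #(repeatPositions (fun i => S (PA₁ i))) ≤ #(repeatPositions (fun i => S (PA₂ i))) := by
  refine card_le_card_of_injOn (fun t => PA₂.symm (PA₁ t)) ?_
    (PA₂.symm.injective.comp PA₁.injective).injOn
  intro t ht
  simp only [repeatPositions, coe_filter, mem_univ, true_and, Set.mem_ofPred_eq] at ht ⊢
  obtain ⟨t', htt', hS⟩ := ht
  exact ⟨_, hPA₁.symm_covBy_symm hj hPA₂ hS (by simpa using htt'), by simpa using hS⟩

lemma IsStableSort.runCount_le (hj : j < w) (hPA₁ : IsStableSort S j PA₁)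
    (hPA₂ : IsStableSort S (j + 1) PA₂) :
    runCount (fun i => S (PA₂ i)) ≤ runCount (fun i => S (PA₁ i)) := by
  have h₁ := runCount_add_card_repeatPositions (fun i => S (PA₁ i))
  have h₂ := runCount_add_card_repeatPositions (fun i => S (PA₂ i))
  have := hPA₁.card_repeatPositions_le hj hPA₂
  omega

end Fore

theorem stmt14 (h w : ℕ) (S : Fin h → Fin w → ℕ) (j : ℕ) (hj : j < w)
    (PA1 PA2 : Fin h ≃ Fin h)
    (hPA1 : IsStableSort S j PA1) (hPA2 : IsStableSort S (j + 1) PA2)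
    (b e : Fin h) (hbe : b ≤ e)
    (hconst : ∀ t : Fin h, b ≤ t → t ≤ e → S (PA1 t) = S (PA1 b)) :
    (∀ t : Fin h, b ≤ t → t ≤ e →
        (PA2.symm (PA1 t)).val = (PA2.symm (PA1 b)).val + ((t : ℕ) - (b : ℕ))) ∧
    (∀ u : Fin h, (PA2.symm (PA1 b)).val ≤ u.val → u.val ≤ (PA2.symm (PA1 e)).val →
        S (PA2 u) = S (PA1 b)) ∧
    runCount (fun i : Fin h => S (PA2 i)) ≤ runCount (fun i : Fin h => S (PA1 i)) := by
  have hfore := Fin.val_eq_add_sub_of_covBy (f := fun t => PA2.symm (PA1 t))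
    fun s t hbs hte hst => hPA1.symm_covBy_symm hj hPA2
      (by rw [hconst s hbs (hst.le.trans hte), hconst t (hbs.trans hst.le) hte])
      (by simpa using hst)
  refine ⟨hfore, fun u hbu hue => ?_, hPA1.runCount_le hj hPA2⟩
  obtain ⟨t, hbt, hte, rfl⟩ := Fin.exists_eq_of_val_eq_add_sub hbe hfore u hbu hue
  simpa using hconst t hbt hte

end PBWT
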